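/- Every non-abelian complex H-type Lie algebra has odd complex dimension: if $(\mathfrak{g}, \langle\cdot,\cdot\rangle)$ is a non-abelian complex H-type Lie algebra, then $\dim_{\mathbb{C}} \mathfrak{g} = 2n + 1$ for some integer $n \geq 1$. -/

import Mathlib

/-!
The maps `J_z` anticommute for orthogonal `z, z'` (polarise the isometry condition), and
`J_{iz} = i J_z`, `J_z i = -i J_z`. If the centre contained some `z' ≠ 0` orthogonal to both `z`
and `iz`, these identities would force `J_{z'} u ⊥ J_z v` for all `u, v ∈ V`, which is absurd
since `J_z² = -‖z‖²`; hence the centre is a complex line. For `z ≠ 0` the form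
`(u, v) ↦ ⟪J_z u, v⟫ + i ⟪i J_z u, v⟫` on `V` is complex bilinear, skew-symmetric and
nondegenerate, so `dim_ℂ V` is even, and `V ≠ 0` because the algebra is not abelian.
-/

open scoped RealInnerProductSpace

attribute [local instance 1001] NormedAddCommGroup.toAddCommGroup

open Complex (I)
open Module (finrank)

theorem LinearMap.BilinForm.even_finrank_of_separatingLeft {K M : Type*} [Field K]
    [AddCommGroup M] [Module K M] [FiniteDimensional K M] {B : LinearMap.BilinForm K M}
    (hB : LinearMap.SeparatingLeft B) (hskew : ∀ x y, B x y = -B y x) (hK : ringChar K ≠ 2) :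
    Even (finrank K M) := by
  let b := Module.finBasis K M
  have hdet := (nondegenerate_iff_det_ne_zero b).mp (.ofSeparatingLeft hB)
  have htranspose : (toMatrix b B).transpose = -toMatrix b B := by
    ext i j
    simp only [Matrix.transpose_apply, Matrix.neg_apply, toMatrix_apply, hskew (b j)]
  have hsign : (-1 : K) ^ finrank K M = 1 := by
    have := congrArg Matrix.det htranspose
    rw [Matrix.det_transpose, Matrix.det_neg, Fintype.card_fin] at this
    exact mul_right_cancel₀ hdet (by rw [one_mul, ← this])
  exact (neg_one_pow_eq_one_iff_even (Ring.neg_one_ne_one_of_char_ne_two hK)).mp hsign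

theorem smul_eq_re_smul_add_im_smul {E : Type*} [AddCommGroup E] [Module ℂ E] [Module ℝ E]
    [IsScalarTower ℝ ℂ E] (a : ℂ) (x : E) : a • x = a.re • x + a.im • (I • x) := by
  conv_lhs => rw [← Complex.re_add_im a]
  rw [add_smul, mul_smul, ← Complex.coe_algebraMap, algebraMap_smul, algebraMap_smul]

section RealInner

variable {E : Type*} [NormedAddCommGroup E] [InnerProductSpace ℝ E]

theorem eq_of_mem_of_forall_inner_eq {S : Type*} [SetLike S E] [AddSubgroupClass S E] {K : S}
    {x y : E} (hx : x ∈ K) (hy : y ∈ K) (h : ∀ v ∈ K, ⟪x, v⟫ = ⟪y, v⟫) : x = y :=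
  sub_eq_zero.mp <| inner_self_eq_zero (𝕜 := ℝ) |>.mp <| by
    rw [inner_sub_left, h _ (sub_mem hx hy), sub_self]

theorem map_add_of_inner_map_map {S : Type*} [SetLike S E] [AddSubgroupClass S E] {K : S}
    {f : E → E} {c : ℝ} (hf : ∀ u ∈ K, ∀ v ∈ K, ⟪f u, f v⟫ = c * ⟪u, v⟫) {u v : E}
    (hu : u ∈ K) (hv : v ∈ K) : f (u + v) = f u + f v := by
  have huv := add_mem hu hv
  have key : ⟪f (u + v) - f u - f v, f (u + v) - f u - f v⟫
      = c * ⟪u + v - u - v, u + v - u - v⟫ := by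
    simp only [inner_sub_left, inner_sub_right, hf _ huv _ huv, hf _ huv _ hu, hf _ huv _ hv,
      hf _ hu _ huv, hf _ hu _ hu, hf _ hu _ hv, hf _ hv _ huv, hf _ hv _ hu, hf _ hv _ hv]
    ring
  rw [add_sub_cancel_left, sub_self, inner_zero_left, mul_zero] at key
  rw [← sub_eq_zero, ← sub_sub]
  exact inner_self_eq_zero.mp key

end RealInner

section HermitianComplexStructure

variable {E : Type*} [NormedAddCommGroup E] [InnerProductSpace ℝ E] [Module ℂ E]

variable (E) in
def IsHermitianComplexStructure : Prop := ∀ x y : E, ⟪I • x, I • y⟫ = ⟪x, y⟫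

noncomputable def hermInner (x y : E) : ℂ := (⟪x, y⟫ : ℂ) + (⟪I • x, y⟫ : ℂ) * I

theorem hermInner_add_right (x y y' : E) :
    hermInner x (y + y') = hermInner x y + hermInner x y' := by
  simp only [hermInner, inner_add_right]
  push_cast
  ring

theorem inner_I_smul_left (hherm : IsHermitianComplexStructure E) (x y : E) :
    ⟪I • x, y⟫ = -⟪x, I • y⟫ := by
  rw [← hherm, smul_smul, Complex.I_mul_I, neg_one_smul, inner_neg_left]

theorem inner_I_smul_self (hherm : IsHermitianComplexStructure E) (x : E) :
    ⟪I • x, x⟫ = 0 := by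
  have := inner_I_smul_left hherm x x
  rw [real_inner_comm (I • x) x] at this
  linarith

theorem hermInner_self (hherm : IsHermitianComplexStructure E) (x : E) :
    hermInner x x = (‖x‖ ^ 2 : ℝ) := by
  rw [hermInner, inner_I_smul_self hherm, real_inner_self_eq_norm_sq]
  simp

variable [IsScalarTower ℝ ℂ E]

noncomputable def Submodule.hermOrthogonal (hherm : IsHermitianComplexStructure E)
    (Z : Submodule ℂ E) : Submodule ℂ E where
  toAddSubmonoid := (Z.restrictScalars ℝ)ᗮ.toAddSubmonoid
  smul_mem' a u hu := by
    have hIu : I • u ∈ (Z.restrictScalars ℝ)ᗮ := fun z hz => by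
      rw [real_inner_comm, inner_I_smul_left hherm, real_inner_comm, hu _ (Z.smul_mem I hz),
        neg_zero]
    rw [smul_eq_re_smul_add_im_smul]
    exact add_mem (Submodule.smul_mem _ _ hu) (Submodule.smul_mem _ _ hIu)

theorem Submodule.finrank_add_finrank_hermOrthogonal [FiniteDimensional ℂ E]
    (hherm : IsHermitianComplexStructure E) (Z : Submodule ℂ E) :
    finrank ℂ Z + finrank ℂ (Z.hermOrthogonal hherm) = finrank ℂ E := by
  have : FiniteDimensional ℝ E := Module.Finite.trans ℂ E
  exact Submodule.finrank_add_eq_of_isCompl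
    ((Submodule.isCompl_restrictScalars_iff (S := ℝ)).mp (Z.restrictScalars ℝ).isCompl_orthogonal)

theorem hermInner_smul_right (hherm : IsHermitianComplexStructure E) (x y : E) (a : ℂ) :
    hermInner x (a • y) = a * hermInner x y := by
  have hI : hermInner x (I • y) = I * hermInner x y := by
    simp only [hermInner]
    rw [hherm, show ⟪x, I • y⟫ = -⟪I • x, y⟫ by rw [inner_I_smul_left hherm, neg_neg]]
    push_cast
    linear_combination (-(⟪I • x, y⟫ : ℂ)) * Complex.I_sq
  have hre (r : ℝ) (y : E) : hermInner x (r • y) = r * hermInner x y := by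
    simp only [hermInner, real_inner_smul_right]
    push_cast
    ring
  rw [smul_eq_re_smul_add_im_smul, hermInner_add_right, hre, hre, hI]
  linear_combination hermInner x y * Complex.re_add_im a

end HermitianComplexStructure

section HType

variable {E : Type*} [NormedAddCommGroup E] [InnerProductSpace ℝ E] [Module ℂ E] [Bracket E E]

/-- The maps `J_z` of an H-type Lie algebra, where `Z` is the centre and `V` its orthogonal
complement. -/
structure IsHTypeFamily (Z V : Submodule ℂ E) (J : E → E → E) : Prop where
  mapsTo : ∀ z ∈ Z, ∀ u ∈ V, J z u ∈ V
  inner_apply : ∀ z ∈ Z, ∀ u ∈ V, ∀ v ∈ V, ⟪J z u, v⟫ = ⟪z, ⁅u, v⁆⟫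
  inner_apply_apply_of_norm_eq_one :
    ∀ z ∈ Z, ‖z‖ = 1 → ∀ u ∈ V, ∀ v ∈ V, ⟪J z u, J z v⟫ = ⟪u, v⟫
  lie_self : ∀ u ∈ V, ⁅u, u⁆ = 0
  lie_I_smul : ∀ u ∈ V, ∀ v ∈ V, ⁅I • u, v⁆ = I • ⁅u, v⁆

namespace IsHTypeFamily

variable {Z V : Submodule ℂ E} {J : E → E → E} {z z' u v : E}

theorem apply_add_left (h : IsHTypeFamily Z V J) (hz : z ∈ Z) (hz' : z' ∈ Z) (hu : u ∈ V) :
    J (z + z') u = J z u + J z' u := by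
  have hzz' := Z.add_mem hz hz'
  refine eq_of_mem_of_forall_inner_eq (h.mapsTo _ hzz' _ hu)
    (V.add_mem (h.mapsTo _ hz _ hu) (h.mapsTo _ hz' _ hu)) fun v hv => ?_
  rw [h.inner_apply _ hzz' _ hu _ hv, inner_add_left, inner_add_left,
    h.inner_apply _ hz _ hu _ hv, h.inner_apply _ hz' _ hu _ hv]

theorem inner_apply_self (h : IsHTypeFamily Z V J) (hz : z ∈ Z) (hu : u ∈ V) :
    ⟪J z u, u⟫ = 0 := by
  rw [h.inner_apply _ hz _ hu _ hu, h.lie_self _ hu, inner_zero_right]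

variable [IsScalarTower ℝ ℂ E]

theorem apply_smul_left (h : IsHTypeFamily Z V J) (r : ℝ) (hz : z ∈ Z) (hu : u ∈ V) :
    J (r • z) u = r • J z u := by
  have hrz := Z.smul_of_tower_mem r hz
  refine eq_of_mem_of_forall_inner_eq (h.mapsTo _ hrz _ hu)
    (V.smul_of_tower_mem r (h.mapsTo _ hz _ hu)) fun v hv => ?_
  rw [h.inner_apply _ hrz _ hu _ hv, real_inner_smul_left, real_inner_smul_left,
    h.inner_apply _ hz _ hu _ hv]

theorem inner_apply_apply (h : IsHTypeFamily Z V J) (hz : z ∈ Z) (hu : u ∈ V) (hv : v ∈ V) :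
    ⟪J z u, J z v⟫ = ‖z‖ ^ 2 * ⟪u, v⟫ := by
  rcases eq_or_ne z 0 with rfl | hz0
  · have hJ0 (w : E) (hw : w ∈ V) : J 0 w = 0 := by
      simpa using h.apply_smul_left 0 Z.zero_mem hw
    simp [hJ0 u hu, hJ0 v hv]
  · have hunit := Z.smul_of_tower_mem ‖z‖⁻¹ hz
    have hz_eq : z = ‖z‖ • (‖z‖⁻¹ • z) := by
      rw [smul_smul, mul_inv_cancel₀ (norm_ne_zero_iff.mpr hz0), one_smul]
    rw [hz_eq, h.apply_smul_left _ hunit hu, h.apply_smul_left _ hunit hv,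
      real_inner_smul_left, real_inner_smul_right,
      h.inner_apply_apply_of_norm_eq_one _ hunit (norm_smul_inv_norm hz0) _ hu _ hv,
      ← hz_eq]
    ring

theorem apply_add_right (h : IsHTypeFamily Z V J) (hz : z ∈ Z) (hu : u ∈ V) (hv : v ∈ V) :
    J z (u + v) = J z u + J z v :=
  map_add_of_inner_map_map (fun _ hu _ hv => h.inner_apply_apply hz hu hv) hu hv

theorem inner_apply_eq_neg (h : IsHTypeFamily Z V J) (hz : z ∈ Z) (hu : u ∈ V) (hv : v ∈ V) :
    ⟪J z u, v⟫ = -⟪J z v, u⟫ := by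
  have := h.inner_apply_self hz (V.add_mem hu hv)
  rw [h.apply_add_right hz hu hv, inner_add_left, inner_add_right, inner_add_right,
    h.inner_apply_self hz hu, h.inner_apply_self hz hv] at this
  linarith

theorem apply_apply (h : IsHTypeFamily Z V J) (hz : z ∈ Z) (hu : u ∈ V) :
    J z (J z u) = -(‖z‖ ^ 2 • u) := by
  have hJu := h.mapsTo _ hz _ hu
  refine eq_of_mem_of_forall_inner_eq (h.mapsTo _ hz _ hJu)
    (V.neg_mem (V.smul_of_tower_mem _ hu)) fun v hv => ?_
  rw [h.inner_apply_eq_neg hz hJu hv, h.inner_apply_apply hz hv hu, inner_neg_left,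
    real_inner_smul_left, real_inner_comm]

theorem apply_I_smul_left (h : IsHTypeFamily Z V J) (hherm : IsHermitianComplexStructure E)
    (hz : z ∈ Z) (hu : u ∈ V) : J (I • z) u = I • J z u := by
  have hIz := Z.smul_mem I hz
  refine eq_of_mem_of_forall_inner_eq (h.mapsTo _ hIz _ hu)
    (V.smul_mem I (h.mapsTo _ hz _ hu)) fun v hv => ?_
  rw [h.inner_apply_eq_neg hIz hu hv, h.inner_apply _ hIz _ hv _ hu, inner_I_smul_left hherm,
    ← h.lie_I_smul _ hv _ hu, ← h.inner_apply _ hz _ (V.smul_mem I hv) _ hu,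
    h.inner_apply_eq_neg hz (V.smul_mem I hv) hu, inner_I_smul_left hherm, neg_neg]

theorem apply_I_smul_right (h : IsHTypeFamily Z V J) (hherm : IsHermitianComplexStructure E)
    (hz : z ∈ Z) (hu : u ∈ V) : J z (I • u) = -(I • J z u) := by
  have hIu := V.smul_mem I hu
  refine eq_of_mem_of_forall_inner_eq (h.mapsTo _ hz _ hIu)
    (V.neg_mem (V.smul_mem I (h.mapsTo _ hz _ hu))) fun v hv => ?_
  rw [h.inner_apply _ hz _ hIu _ hv, h.lie_I_smul _ hu _ hv, real_inner_comm,
    inner_I_smul_left hherm, real_inner_comm, ← h.inner_apply _ (Z.smul_mem I hz) _ hu _ hv,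
    h.apply_I_smul_left hherm hz hu, inner_neg_left]

theorem inner_apply_add_inner_apply (h : IsHTypeFamily Z V J) (hz : z ∈ Z) (hz' : z' ∈ Z)
    (hzz' : ⟪z, z'⟫ = 0) (hu : u ∈ V) (hv : v ∈ V) :
    ⟪J z u, J z' v⟫ + ⟪J z' u, J z v⟫ = 0 := by
  have hsum := h.inner_apply_apply (Z.add_mem hz hz') hu hv
  rw [h.apply_add_left hz hz' hu, h.apply_add_left hz hz' hv, inner_add_left, inner_add_right,
    inner_add_right, h.inner_apply_apply hz hu hv, h.inner_apply_apply hz' hu hv,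
    norm_add_sq_real, hzz'] at hsum
  linarith

theorem inner_apply_apply_eq_zero (h : IsHTypeFamily Z V J)
    (hherm : IsHermitianComplexStructure E) (hz : z ∈ Z) (hz' : z' ∈ Z) (hzz' : ⟪z, z'⟫ = 0)
    (hIzz' : ⟪I • z, z'⟫ = 0) (hu : u ∈ V) (hv : v ∈ V) : ⟪J z' u, J z v⟫ = 0 := by
  have hzIz' : ⟪z, I • z'⟫ = 0 := by rw [← neg_eq_zero, ← inner_I_smul_left hherm, hIzz']
  have hIu := V.smul_mem I hu
  have h₁ := h.inner_apply_add_inner_apply hz hz' hzz' hu hv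
  have h₂ := h.inner_apply_add_inner_apply hz (Z.smul_mem I hz') hzIz' hIu hv
  rw [h.apply_I_smul_right hherm hz hu, h.apply_I_smul_left hherm hz' hv,
    h.apply_I_smul_left hherm hz' hIu, h.apply_I_smul_right hherm hz' hu, smul_neg, smul_smul,
    Complex.I_mul_I, neg_one_smul, neg_neg, inner_neg_left, hherm] at h₂
  linarith

theorem eq_zero_of_inner_eq_zero (h : IsHTypeFamily Z V J)
    (hherm : IsHermitianComplexStructure E) (hV : V ≠ ⊥) (hz : z ∈ Z) (hz0 : z ≠ 0)
    (hz' : z' ∈ Z) (hzz' : ⟪z, z'⟫ = 0) (hIzz' : ⟪I • z, z'⟫ = 0) : z' = 0 := by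
  obtain ⟨u, hu, hu0⟩ := Submodule.exists_mem_ne_zero_of_ne_bot hV
  have hq := h.mapsTo _ hz' _ hu
  have hzero := h.inner_apply_apply_eq_zero hherm hz hz' hzz' hIzz' hu (h.mapsTo _ hz _ hq)
  rw [h.apply_apply hz hq, inner_neg_right, real_inner_smul_right,
    h.inner_apply_apply hz' hu hu, real_inner_self_eq_norm_sq] at hzero
  simpa [hz0, hu0] using hzero

theorem le_span_singleton (h : IsHTypeFamily Z V J) (hherm : IsHermitianComplexStructure E)
    (hV : V ≠ ⊥) (hz : z ∈ Z) (hz0 : z ≠ 0) : Z ≤ ℂ ∙ z := by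
  intro w hw
  let K := Submodule.span ℝ {z, I • z}
  have : FiniteDimensional ℝ K := FiniteDimensional.span_of_finite ℝ (Set.toFinite _)
  have hKZ : K ≤ Z.restrictScalars ℝ :=
    Submodule.span_le.mpr (Set.insert_subset hz (Set.singleton_subset_iff.mpr (Z.smul_mem I hz)))
  have hperp := K.sub_starProjection_mem_orthogonal w
  have hw' : w - K.starProjection w ∈ Z := Z.sub_mem hw (hKZ (K.starProjection_apply_mem w))
  have hproj : w - K.starProjection w = 0 :=
    h.eq_zero_of_inner_eq_zero hherm hV hz hz0 hw'
      (hperp z (Submodule.subset_span (by simp))) (hperp (I • z) (Submodule.subset_span (by simp)))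
  have hKspan : K ≤ (ℂ ∙ z).restrictScalars ℝ :=
    Submodule.span_le.mpr (Set.insert_subset (Submodule.mem_span_singleton_self z)
      (Set.singleton_subset_iff.mpr ((ℂ ∙ z).smul_mem I (Submodule.mem_span_singleton_self z))))
  rw [sub_eq_zero.mp hproj]
  exact hKspan (K.starProjection_apply_mem w)

theorem finrank_le_one (h : IsHTypeFamily Z V J) (hherm : IsHermitianComplexStructure E)
    (hV : V ≠ ⊥) : finrank ℂ Z ≤ 1 := by
  rcases eq_or_ne Z ⊥ with rfl | hZ
  · simp
  obtain ⟨z, hz, hz0⟩ := Submodule.exists_mem_ne_zero_of_ne_bot hZ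
  calc finrank ℂ Z ≤ finrank ℂ (ℂ ∙ z) :=
        Submodule.finrank_mono (h.le_span_singleton hherm hV hz hz0)
    _ = 1 := finrank_span_singleton hz0

theorem hermInner_apply_eq_neg (h : IsHTypeFamily Z V J) (hherm : IsHermitianComplexStructure E)
    (hz : z ∈ Z) (hu : u ∈ V) (hv : v ∈ V) : hermInner (J z u) v = -hermInner (J z v) u := by
  have hI : ⟪I • J z u, v⟫ = -⟪I • J z v, u⟫ := by
    rw [inner_I_smul_left hherm, h.inner_apply_eq_neg hz hu (V.smul_mem I hv),
      h.apply_I_smul_right hherm hz hv, inner_neg_left, neg_neg]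
  simp only [hermInner, h.inner_apply_eq_neg hz hu hv, hI]
  push_cast
  ring

/-- Linearity in `u` is transported from the right slot by skew-symmetry. -/
noncomputable def skewForm (h : IsHTypeFamily Z V J) (hherm : IsHermitianComplexStructure E)
    (hz : z ∈ Z) : LinearMap.BilinForm ℂ V :=
  LinearMap.mk₂ ℂ (fun u v => hermInner (J z u) v)
    (fun u u' v => by
      simp only [h.hermInner_apply_eq_neg hherm hz (V.add_mem u.2 u'.2) v.2,
        h.hermInner_apply_eq_neg hherm hz u.2 v.2, h.hermInner_apply_eq_neg hherm hz u'.2 v.2,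
        Submodule.coe_add, hermInner_add_right]
      ring)
    (fun a u v => by
      simp only [h.hermInner_apply_eq_neg hherm hz (V.smul_mem a u.2) v.2,
        h.hermInner_apply_eq_neg hherm hz u.2 v.2, Submodule.coe_smul,
        hermInner_smul_right hherm, smul_eq_mul]
      ring)
    (fun u v v' => hermInner_add_right _ _ _)
    (fun a u v => hermInner_smul_right hherm _ _ a)

theorem even_finrank (h : IsHTypeFamily Z V J) (hherm : IsHermitianComplexStructure E)
    [FiniteDimensional ℂ V] (hz : z ∈ Z) (hz0 : z ≠ 0) : Even (finrank ℂ V) := by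
  refine LinearMap.BilinForm.even_finrank_of_separatingLeft (B := h.skewForm hherm hz)
    ?_ (fun u v => h.hermInner_apply_eq_neg hherm hz u.2 v.2) (by simp [ringChar.eq_zero])
  intro u hu
  have hJu := hu ⟨J z u, h.mapsTo _ hz _ u.2⟩
  simp only [skewForm, LinearMap.mk₂_apply, hermInner_self hherm] at hJu
  rw [← real_inner_self_eq_norm_sq, h.inner_apply_apply hz u.2 u.2,
    real_inner_self_eq_norm_sq] at hJu
  simpa [hz0] using hJu

end IsHTypeFamily

end HType

/-- Every non-abelian complex H-type Lie algebra has odd complex dimension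
`2n + 1` with `n ≥ 1`. -/
theorem complex_Htype_odd_dimension
    {G : Type*} [LieRing G]
    [NormedAddCommGroup G] [InnerProductSpace ℝ G]
    [Module ℂ G] [IsScalarTower ℝ ℂ G] [FiniteDimensional ℂ G]
    (hbil : ∀ (a : ℂ) (x y : G), ⁅a • x, y⁆ = a • ⁅x, y⁆)
    (hherm : ∀ x y : G, ⟪(Complex.I : ℂ) • x, (Complex.I : ℂ) • y⟫ = ⟪x, y⟫)
    (𝔷 : Submodule ℂ G) (h𝔷 : ∀ x : G, x ∈ 𝔷 ↔ ∀ y : G, ⁅x, y⁆ = 0)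
    (J : G → G → G)
    (hJmem : ∀ z ∈ 𝔷, ∀ u ∈ (𝔷.restrictScalars ℝ)ᗮ, J z u ∈ (𝔷.restrictScalars ℝ)ᗮ)
    (hJdef : ∀ z ∈ 𝔷, ∀ u ∈ (𝔷.restrictScalars ℝ)ᗮ, ∀ v ∈ (𝔷.restrictScalars ℝ)ᗮ,
      ⟪J z u, v⟫ = ⟪z, ⁅u, v⁆⟫)
    (h1 : ∀ u ∈ (𝔷.restrictScalars ℝ)ᗮ, ∀ v ∈ (𝔷.restrictScalars ℝ)ᗮ, ⁅u, v⁆ ∈ 𝔷)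
    (h2 : ∀ z ∈ 𝔷, ‖z‖ = 1 → ∀ u ∈ (𝔷.restrictScalars ℝ)ᗮ, ∀ v ∈ (𝔷.restrictScalars ℝ)ᗮ,
      ⟪J z u, J z v⟫ = ⟪u, v⟫)
    (hnonab : ∃ x y : G, ⁅x, y⁆ ≠ 0) :
    ∃ n : ℕ, 1 ≤ n ∧ Module.finrank ℂ G = 2 * n + 1 := by
  set V := 𝔷.hermOrthogonal hherm
  -- `lie_self` concerns the zero of the `LieRing` structure, which is a priori not the zero of
  -- the normed group; `hbil` with `a = 0` identifies the two.
  have lie_self' (x : G) : ⁅x, x⁆ = 0 :=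
    calc ⁅x, x⁆ = ⁅(0 : ℂ) • (0 : G), 0⁆ := by rw [zero_smul, lie_self, lie_self]
      _ = 0 := by rw [hbil, zero_smul]
  have hH : IsHTypeFamily 𝔷 V J :=
    ⟨hJmem, hJdef, h2, fun u _ => lie_self' u, fun u _ v _ => hbil Complex.I u v⟩
  have hsum : finrank ℂ 𝔷 + finrank ℂ V = finrank ℂ G :=
    𝔷.finrank_add_finrank_hermOrthogonal hherm
  obtain ⟨x, y, hxy⟩ := hnonab
  have hV : V ≠ ⊥ := by
    intro hV
    rw [hV, finrank_bot, add_zero] at hsum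
    exact hxy ((h𝔷 x).1 (by rw [Submodule.eq_top_of_finrank_eq hsum]; trivial) y)
  have h𝔷ne : 𝔷 ≠ ⊥ := by
    intro h𝔷bot
    rw [h𝔷bot, finrank_bot, zero_add] at hsum
    have hVtop := Submodule.eq_top_of_finrank_eq hsum
    have hxy𝔷 := h1 x (show x ∈ V by rw [hVtop]; trivial) y (show y ∈ V by rw [hVtop]; trivial)
    rw [h𝔷bot] at hxy𝔷
    exact hxy hxy𝔷
  obtain ⟨z, hz, hz0⟩ := Submodule.exists_mem_ne_zero_of_ne_bot h𝔷ne
  have h𝔷one : finrank ℂ 𝔷 = 1 :=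
    (hH.finrank_le_one hherm hV).antisymm (Submodule.one_le_finrank_iff.mpr h𝔷ne)
  obtain ⟨n, hn⟩ := hH.even_finrank hherm hz hz0
  have hVpos := Submodule.one_le_finrank_iff.mpr hV
  exact ⟨n, by omega, by omega⟩
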